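/- arXiv:0811.3784 — 3 statements merged into one kernel-verified Lean document; each statement's English description precedes it below -/
import Mathlib

section
/- Let z_1, …, z_d ∈ ℂ be distinct, L_0 ∈ Mat_N(ℂ), and p_i, q_i ∈ ℂ^N. Set B_i(w) = I_N + p_i q_iᵀ/(w − z_i), L(w) = L_0 B_1(w) B_2(w) ⋯ B_d(w), and for each i the prefix T_i^<(w) = L_0 B_1(w) ⋯ B_{i−1}(w) and suffix T_i^>(w) = B_{i+1}(w) ⋯ B_d(w) (empty products equal I_N resp. are omitted). Then for all u, v ∈ ℂ \ {z_1,…,z_d} with u ≠ v: Σ_{i=1}^d (T_i^<(u) ⊗ T_i^<(v)) · [ ((p_i ⊗ I_N)(I_N ⊗ q_iᵀ) − (I_N ⊗ p_i)(q_iᵀ ⊗ I_N)) / ((u − z_i)(v − z_i)) ] · (T_i^>(u) ⊗ T_i^>(v)) = (1/(u − v)) · [ 𝒫 , L(u) ⊗ L(v) ], where [X,Y] = XY − YX. (This is the quadratic r-matrix relation {L(u) ⊗, L(v)} = [r(u−v), L(u) ⊗ L(v)], r(z) = 𝒫/z, for the multiplicative representation with canonical brackets {q_i^l, p_j^s} =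 δ_{ij} δ_{ls}.) -/
/-!
`X ↦ 𝒫 X - X 𝒫` is a derivation of the matrix ring, so its value on the product
`L(u) ⊗ L(v) = (L₀ ⊗ L₀) (B₁(u) ⊗ B₁(v)) ⋯ (B_d(u) ⊗ B_d(v))` is the sum over `i` of the products
in which the `i`-th factor is replaced by its commutator with `𝒫`; the factor `L₀ ⊗ L₀`
contributes nothing because `𝒫 (X ⊗ Y) = (Y ⊗ X) 𝒫`. With `R = p qᵀ`, the summand of the theorem
is `((R ⊗ I) 𝒫 - 𝒫 (R ⊗ I)) / ((u - z) (v - z))`, while expanding `B(u) ⊗ B(v)` gives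
`[𝒫, B(u) ⊗ B(v)] = ((v - z)⁻¹ - (u - z)⁻¹) ((R ⊗ I) 𝒫 - 𝒫 (R ⊗ I))`, and
`(v - z)⁻¹ - (u - z)⁻¹ = (u - v) / ((u - z) (v - z))`.
-/

open Matrix BigOperators
open scoped Kronecker

noncomputable section

/-- The permutation matrix `𝒫 = Σ_{i,j} e_{ij} ⊗ e_{ji}` in `Mat_{N²}(ℂ)`. -/
def permMat (N : ℕ) : Matrix (Fin N × Fin N) (Fin N × Fin N) ℂ :=
  ∑ i : Fin N, ∑ j : Fin N,
    (Matrix.single i j (1 : ℂ)) ⊗ₖ (Matrix.single j i (1 : ℂ))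

/-- The Kronecker product `a ⊗ M` of a column vector `a ∈ ℂ^N` with an `N×N` matrix. -/
def colKron {N : ℕ} (a : Fin N → ℂ) (M : Matrix (Fin N) (Fin N) ℂ) :
    Matrix (Fin N × Fin N) (Fin N) ℂ :=
  fun ip j => a ip.1 * M ip.2 j

/-- The Kronecker product `M ⊗ a` of an `N×N` matrix with a column vector. -/
def kronCol {N : ℕ} (M : Matrix (Fin N) (Fin N) ℂ) (a : Fin N → ℂ) :
    Matrix (Fin N × Fin N) (Fin N) ℂ :=
  fun ip j => M ip.1 j * a ip.2

/-- The Kronecker product `bᵀ ⊗ M` of a row vector with an `N×N` matrix. -/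
def rowKron {N : ℕ} (b : Fin N → ℂ) (M : Matrix (Fin N) (Fin N) ℂ) :
    Matrix (Fin N) (Fin N × Fin N) ℂ :=
  fun i jq => b jq.1 * M i jq.2

/-- The Kronecker product `M ⊗ bᵀ` of an `N×N` matrix with a row vector. -/
def kronRow {N : ℕ} (M : Matrix (Fin N) (Fin N) ℂ) (b : Fin N → ℂ) :
    Matrix (Fin N) (Fin N × Fin N) ℂ :=
  fun i jq => M i jq.1 * b jq.2

/-- The ordered product `B_{i₁}(w) B_{i₂}(w) ⋯` over the indices `j` of `Fin d`
(in increasing order) satisfying a predicate `c`. -/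
def orderedProd {N d : ℕ} (B : Fin d → ℂ → Matrix (Fin N) (Fin N) ℂ)
    (c : Fin d → Prop) [DecidablePred c] (w : ℂ) : Matrix (Fin N) (Fin N) ℂ :=
  (List.ofFn fun j : Fin d => if c j then B j w else 1).prod

lemma mul_prod_ofFn_sub_prod_ofFn_mul {R : Type*} [Ring R] (P : R) : ∀ {d : ℕ} (f : Fin d → R),
    P * (List.ofFn f).prod - (List.ofFn f).prod * P =
      ∑ i : Fin d, (List.ofFn fun j : Fin d => if (j : ℕ) < (i : ℕ) then f j else 1).prod *
        (P * f i - f i * P) * (List.ofFn fun j : Fin d => if (i : ℕ) < (j : ℕ) then f j else 1).prod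
  | 0, f => by simp
  | d + 1, f => by
    rw [Fin.sum_univ_succ]
    simp only [List.ofFn_succ, List.prod_cons, Fin.val_zero, Fin.val_succ, lt_self_iff_false,
      Nat.not_lt_zero, Nat.zero_lt_succ, Nat.succ_lt_succ_iff, if_true, if_false, one_mul]
    have ih := congrArg (f 0 * ·) (mul_prod_ofFn_sub_prod_ofFn_mul P fun i => f i.succ)
    simp only [Finset.mul_sum, ← mul_assoc] at ih
    rw [← ih, List.ofFn_const, List.prod_replicate, one_pow, one_mul]
    noncomm_ring

lemma list_prod_ofFn_kronecker {α m n : Type*} [CommSemiring α] [Fintype m] [Fintype n]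
    [DecidableEq m] [DecidableEq n] :
    ∀ {d : ℕ} (X : Fin d → Matrix m m α) (Y : Fin d → Matrix n n α),
      (List.ofFn fun j => X j ⊗ₖ Y j).prod = (List.ofFn X).prod ⊗ₖ (List.ofFn Y).prod
  | 0, _, _ => by simp
  | d + 1, X, Y => by
    simp only [List.ofFn_succ, List.prod_cons, list_prod_ofFn_kronecker fun j => X j.succ,
      mul_kronecker_mul]

lemma permMat_apply {N : ℕ} (a b c e : Fin N) :
    permMat N (a, b) (c, e) = if a = e ∧ b = c then 1 else 0 := by
  simp [permMat, Matrix.single, Matrix.sum_apply, ite_and, eq_comm]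

lemma permMat_mul_apply {N : ℕ} {m : Type*} [Fintype m] (M : Matrix (Fin N × Fin N) m ℂ)
    (a b : Fin N) (y : m) : (permMat N * M) (a, b) y = M (b, a) y := by
  rw [Matrix.mul_apply, Fintype.sum_prod_type]
  simp [permMat_apply, ite_and]

lemma mul_permMat_apply {N : ℕ} {m : Type*} [Fintype m] (M : Matrix m (Fin N × Fin N) ℂ)
    (x : m) (c e : Fin N) : (M * permMat N) x (c, e) = M x (e, c) := by
  rw [Matrix.mul_apply, Fintype.sum_prod_type]
  simp [permMat_apply, ite_and]

lemma permMat_mul_kronecker {N : ℕ} (X Y : Matrix (Fin N) (Fin N) ℂ) :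
    permMat N * (X ⊗ₖ Y) = (Y ⊗ₖ X) * permMat N := by
  ext ⟨a, b⟩ ⟨c, e⟩
  simp [permMat_mul_apply, mul_permMat_apply, mul_comm]

lemma colKron_one_mul_kronRow_one {N : ℕ} (p q : Fin N → ℂ) :
    colKron p 1 * kronRow 1 q = (vecMulVec p q ⊗ₖ 1) * permMat N := by
  ext ⟨a, b⟩ ⟨c, e⟩
  rw [mul_permMat_apply]
  simp [Matrix.mul_apply, colKron, kronRow, Matrix.one_apply, vecMulVec_apply]

lemma kronCol_one_mul_rowKron_one {N : ℕ} (p q : Fin N → ℂ) :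
    kronCol 1 p * rowKron q 1 = permMat N * (vecMulVec p q ⊗ₖ 1) := by
  ext ⟨a, b⟩ ⟨c, e⟩
  rw [permMat_mul_apply]
  simp [Matrix.mul_apply, kronCol, rowKron, Matrix.one_apply, vecMulVec_apply]

lemma permMat_commutator_one_add_smul_kronecker {N : ℕ} (a b : ℂ)
    (R : Matrix (Fin N) (Fin N) ℂ) :
    permMat N * ((1 + a • R) ⊗ₖ (1 + b • R)) - ((1 + a • R) ⊗ₖ (1 + b • R)) * permMat N =
      (b - a) • ((R ⊗ₖ 1) * permMat N - permMat N * (R ⊗ₖ 1)) := by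
  have hRR := permMat_mul_kronecker R R
  have hR1 := permMat_mul_kronecker R 1
  have h1R := permMat_mul_kronecker 1 R
  simp only [add_kronecker, kronecker_add, smul_kronecker, kronecker_smul, one_kronecker_one,
    mul_add, add_mul, mul_smul_comm, smul_mul_assoc, mul_one, one_mul, hRR, h1R, ← hR1]
  module

lemma smul_rankOne_term_eq_smul_permMat_commutator {N : ℕ} (p q : Fin N → ℂ) {z u v : ℂ}
    (hu : u ≠ z) (hv : v ≠ z) (huv : u ≠ v) :
    ((u - z) * (v - z))⁻¹ • (colKron p 1 * kronRow 1 q - kronCol 1 p * rowKron q 1) =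
      (u - v)⁻¹ •
        (permMat N * ((1 + (u - z)⁻¹ • vecMulVec p q) ⊗ₖ (1 + (v - z)⁻¹ • vecMulVec p q)) -
          ((1 + (u - z)⁻¹ • vecMulVec p q) ⊗ₖ (1 + (v - z)⁻¹ • vecMulVec p q)) * permMat N) := by
  rw [permMat_commutator_one_add_smul_kronecker, colKron_one_mul_kronRow_one,
    kronCol_one_mul_rowKron_one, smul_smul]
  congr 1
  have : u - z ≠ 0 := sub_ne_zero.mpr hu
  have : v - z ≠ 0 := sub_ne_zero.mpr hv
  have : u - v ≠ 0 := sub_ne_zero.mpr huv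
  field_simp
  ring

lemma orderedProd_kronecker_orderedProd {N d : ℕ} (B : Fin d → ℂ → Matrix (Fin N) (Fin N) ℂ)
    (c : Fin d → Prop) [DecidablePred c] (u v : ℂ) :
    orderedProd B c u ⊗ₖ orderedProd B c v =
      (List.ofFn fun j => if c j then B j u ⊗ₖ B j v else 1).prod := by
  rw [orderedProd, orderedProd, ← list_prod_ofFn_kronecker]
  congr! 3 with j
  split_ifs <;> simp

theorem statement3_general (N d : ℕ) (z : Fin d → ℂ)
    (L₀ : Matrix (Fin N) (Fin N) ℂ) (p q : Fin d → Fin N → ℂ)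
    (B : Fin d → ℂ → Matrix (Fin N) (Fin N) ℂ)
    (hB : ∀ i w, B i w = 1 + (w - z i)⁻¹ • Matrix.vecMulVec (p i) (q i))
    (L : ℂ → Matrix (Fin N) (Fin N) ℂ)
    (hL : ∀ w, L w = L₀ * (List.ofFn fun j : Fin d => B j w).prod)
    (Tlt Tgt : Fin d → ℂ → Matrix (Fin N) (Fin N) ℂ)
    (hTlt : ∀ i w, Tlt i w = L₀ * orderedProd B (fun j => (j : ℕ) < (i : ℕ)) w)
    (hTgt : ∀ i w, Tgt i w = orderedProd B (fun j => (i : ℕ) < (j : ℕ)) w)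
    (u v : ℂ) (hu : ∀ i, u ≠ z i) (hv : ∀ i, v ≠ z i) (huv : u ≠ v) :
    ∑ i : Fin d,
      ((Tlt i u) ⊗ₖ (Tlt i v)) *
        (((u - z i) * (v - z i))⁻¹ •
          (colKron (p i) 1 * kronRow 1 (q i) - kronCol 1 (p i) * rowKron (q i) 1)) *
        ((Tgt i u) ⊗ₖ (Tgt i v)) =
    (u - v)⁻¹ •
      (permMat N * ((L u) ⊗ₖ (L v)) - ((L u) ⊗ₖ (L v)) * permMat N) := by
  have hsite : ∀ i, ((u - z i) * (v - z i))⁻¹ •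
      (colKron (p i) 1 * kronRow 1 (q i) - kronCol 1 (p i) * rowKron (q i) 1) =
      (u - v)⁻¹ • (permMat N * (B i u ⊗ₖ B i v) - (B i u ⊗ₖ B i v) * permMat N) := fun i => by
    rw [hB, hB]
    exact smul_rankOne_term_eq_smul_permMat_commutator _ _ (hu i) (hv i) huv
  have hLL : L u ⊗ₖ L v = (L₀ ⊗ₖ L₀) * (List.ofFn fun j => B j u ⊗ₖ B j v).prod := by
    rw [hL, hL, list_prod_ofFn_kronecker, mul_kronecker_mul]
  rw [hLL, ← mul_assoc, permMat_mul_kronecker, mul_assoc, mul_assoc, ← mul_sub,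
    mul_prod_ofFn_sub_prod_ofFn_mul, Finset.mul_sum, Finset.smul_sum]
  refine Finset.sum_congr rfl fun i _ => ?_
  rw [hsite, hTlt, hTlt, hTgt, hTgt, mul_kronecker_mul, orderedProd_kronecker_orderedProd,
    orderedProd_kronecker_orderedProd]
  simp only [mul_smul_comm, smul_mul_assoc, mul_assoc]

/-- quadratic r-matrix relation for the rational multiplicative
representation `L(w) = L_0 B_1(w) ⋯ B_d(w)`, `B_i(w) = I + p_i q_iᵀ/(w − z_i)`:
`Σ_i (T_i^<(u) ⊗ T_i^<(v)) · [((p_i ⊗ I)(I ⊗ q_iᵀ) − (I ⊗ p_i)(q_iᵀ ⊗ I))/((u−z_i)(v−z_i))]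
  · (T_i^>(u) ⊗ T_i^>(v)) = (1/(u−v))·[𝒫, L(u) ⊗ L(v)]`. -/
theorem statement3 (N d : ℕ) (z : Fin d → ℂ) (hz : Function.Injective z)
    (L₀ : Matrix (Fin N) (Fin N) ℂ) (p q : Fin d → Fin N → ℂ)
    (B : Fin d → ℂ → Matrix (Fin N) (Fin N) ℂ)
    (hB : ∀ i w, B i w = 1 + (w - z i)⁻¹ • Matrix.vecMulVec (p i) (q i))
    (L : ℂ → Matrix (Fin N) (Fin N) ℂ)
    (hL : ∀ w, L w = L₀ * (List.ofFn fun j : Fin d => B j w).prod)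
    (Tlt Tgt : Fin d → ℂ → Matrix (Fin N) (Fin N) ℂ)
    (hTlt : ∀ i w, Tlt i w = L₀ * orderedProd B (fun j => (j : ℕ) < (i : ℕ)) w)
    (hTgt : ∀ i w, Tgt i w = orderedProd B (fun j => (i : ℕ) < (j : ℕ)) w)
    (u v : ℂ) (hu : ∀ i, u ≠ z i) (hv : ∀ i, v ≠ z i) (huv : u ≠ v) :
    ∑ i : Fin d,
      ((Tlt i u) ⊗ₖ (Tlt i v)) *
        (((u - z i) * (v - z i))⁻¹ •
          (colKron (p i) 1 * kronRow 1 (q i) - kronCol 1 (p i) * rowKron (q i) 1)) *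
        ((Tgt i u) ⊗ₖ (Tgt i v)) =
    (u - v)⁻¹ •
      (permMat N * ((L u) ⊗ₖ (L v)) - ((L u) ⊗ₖ (L v)) * permMat N) :=
  statement3_general N d z L₀ p q B hB L hL Tlt Tgt hTlt hTgt u v hu hv huv

end
end

section
/- Let τ ∈ ℂ with Im τ > 0, let z_m, Δ ∈ ℂ, and s^0, s^1, s^2, s^3 ∈ ℂ. Define the elliptic chain factor B(z) = s^0 I₂ φ(Δ, z−z_m) + (s^1/(πi)) σ_1 e^{πi(z−z_m)} φ(τ/2 + Δ, z−z_m) + (s^2/(πi)) σ_2 e^{πi(z−z_m)} φ((1+τ)/2 + Δ, z−z_m) + (s^3/(πi)) σ_3 φ(1/2 + Δ, z−z_m). Then for every z ∈ ℂ such that all the theta factors θ11(Δ|τ), θ11(τ/2+Δ|τ), θ11((1+τ)/2+Δ|τ), θ11(1/2+Δ|τ) and θ11(z−z_m|τ), θ11(z+1−z_m|τ), θ11(z+τ−z_m|τ) are nonzero: B(z+1) = σ_3 B(z) σ_3 and B(z+τ) = e^{−2πiΔ} σ_1 B(z) σ_1. -/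
open Complex Matrix

noncomputable section

/-- The Jacobi theta function `θ11(z|τ)`. -/
def θ11 (τ z : ℂ) : ℂ :=
  ∑' n : ℤ, Complex.exp ((Real.pi : ℂ) * I * ((n : ℂ) + 1/2) ^ 2 * τ +
    2 * (Real.pi : ℂ) * I * ((n : ℂ) + 1/2) * (z + 1/2))

/-- `θ'11`, the `z`-derivative of `θ11(z|τ)` at `z = 0`. -/
def θ11' (τ : ℂ) : ℂ := deriv (θ11 τ) 0

/-- `φ(w,z) = θ11(w+z|τ) θ'11 / (θ11(w|τ) θ11(z|τ))`. -/
def phi (τ w z : ℂ) : ℂ := θ11 τ (w + z) * θ11' τ / (θ11 τ w * θ11 τ z)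

/-- Pauli matrix σ₁. -/
def σ1 : Matrix (Fin 2) (Fin 2) ℂ := !![0, 1; 1, 0]
/-- Pauli matrix σ₂. -/
def σ2 : Matrix (Fin 2) (Fin 2) ℂ := !![0, -I; I, 0]
/-- Pauli matrix σ₃. -/
def σ3 : Matrix (Fin 2) (Fin 2) ℂ := !![1, 0; 0, -1]

/-- The elliptic chain factor `B(z)` with pole at `z_m` and shift `Δ`. -/
def chainFactor (τ zm Δ s0 s1 s2 s3 z : ℂ) : Matrix (Fin 2) (Fin 2) ℂ :=
  (s0 * phi τ Δ (z - zm)) • (1 : Matrix (Fin 2) (Fin 2) ℂ) +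
  (s1 / ((Real.pi : ℂ) * I) * Complex.exp ((Real.pi : ℂ) * I * (z - zm)) *
     phi τ (τ / 2 + Δ) (z - zm)) • σ1 +
  (s2 / ((Real.pi : ℂ) * I) * Complex.exp ((Real.pi : ℂ) * I * (z - zm)) *
     phi τ ((1 + τ) / 2 + Δ) (z - zm)) • σ2 +
  (s3 / ((Real.pi : ℂ) * I) * phi τ (1 / 2 + Δ) (z - zm)) • σ3

/-! Both monodromies reduce to the quasi-periodicity of `θ11`: termwise, `z ↦ z + 1` multiplies
every term of the series by `-1`, and `z ↦ z + τ` turns the `n`-th term into `-e^{-πiτ-2πiz}` times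
the `(n+1)`-st. Hence `φ(w, ·)` is `1`-periodic and picks up `e^{-2πiw}` under `z ↦ z + τ`.
Written in the Pauli basis, the four coefficients of `B` therefore change by the signs `(+,-,-,+)`
under `z ↦ z + 1` (through `e^{πi(z-z_m)}`) and by `e^{-2πiΔ}(+,+,-,-)` under `z ↦ z + τ`
(through the half-period shifts of `Δ`), which is conjugation by `σ₃`, resp. `σ₁`. -/

open scoped Real

def θ11Term (τ z : ℂ) (n : ℤ) : ℂ :=
  exp (π * I * ((n : ℂ) + 1/2) ^ 2 * τ + 2 * π * I * ((n : ℂ) + 1/2) * (z + 1/2))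

theorem θ11_eq_tsum_θ11Term (τ z : ℂ) : θ11 τ z = ∑' n : ℤ, θ11Term τ z n := rfl

theorem θ11Term_add_one (τ z : ℂ) (n : ℤ) : θ11Term τ (z + 1) n = -θ11Term τ z n := by
  rw [θ11Term, θ11Term, ← exp_add_pi_mul_I, exp_eq_exp_iff_exists_int]
  exact ⟨n, by ring⟩

theorem θ11Term_add_τ (τ z : ℂ) (n : ℤ) :
    θ11Term τ (z + τ) n = -exp (-(π * I * τ) - 2 * π * I * z) * θ11Term τ z (n + 1) := by
  rw [θ11Term, θ11Term, neg_mul, ← exp_add, ← exp_sub_pi_mul_I]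
  push_cast
  ring_nf

theorem θ11_add_one (τ z : ℂ) : θ11 τ (z + 1) = -θ11 τ z := by
  simp only [θ11_eq_tsum_θ11Term, θ11Term_add_one, tsum_neg]

theorem θ11_add_τ (τ z : ℂ) :
    θ11 τ (z + τ) = -exp (-(π * I * τ) - 2 * π * I * z) * θ11 τ z := by
  simp only [θ11_eq_tsum_θ11Term, θ11Term_add_τ, tsum_mul_left]
  congr 1
  exact (Equiv.addRight 1).tsum_eq (θ11Term τ z)

theorem phi_add_one (τ w z : ℂ) : phi τ w (z + 1) = phi τ w z := by
  rw [phi, phi, ← add_assoc, θ11_add_one, θ11_add_one, neg_mul, mul_neg, neg_div_neg_eq]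

theorem phi_add_τ (τ w z : ℂ) : phi τ w (z + τ) = exp (-2 * π * I * w) * phi τ w z := by
  have hsplit : exp (-(π * I * τ) - 2 * π * I * (w + z)) =
      exp (-2 * π * I * w) * exp (-(π * I * τ) - 2 * π * I * z) := by
    rw [← exp_add]; ring_nf
  have := exp_ne_zero (-(π * I * τ) - 2 * π * I * z)
  rw [phi, phi, ← add_assoc, θ11_add_τ, θ11_add_τ, hsplit]
  field_simp

theorem exp_neg_two_pi_I_mul_one_half_add (v : ℂ) :
    exp (-2 * π * I * (1 / 2 + v)) = -exp (-2 * π * I * v) := by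
  rw [← exp_sub_pi_mul_I]; ring_nf

theorem exp_mul_phi_add_one (τ w x : ℂ) :
    exp (π * I * (x + 1)) * phi τ w (x + 1) = -(exp (π * I * x) * phi τ w x) := by
  rw [phi_add_one, mul_add_one, exp_add_pi_mul_I, neg_mul]

theorem exp_mul_phi_add_τ (τ w x : ℂ) :
    exp (π * I * (x + τ)) * phi τ w (x + τ) =
      exp (-2 * π * I * (w - τ / 2)) * (exp (π * I * x) * phi τ w x) := by
  rw [phi_add_τ, ← mul_assoc, ← mul_assoc, ← exp_add, ← exp_add]
  ring_nf

def pauliCombination (a b c d : ℂ) : Matrix (Fin 2) (Fin 2) ℂ :=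
  a • 1 + b • σ1 + c • σ2 + d • σ3

theorem pauliCombination_eq (a b c d : ℂ) :
    pauliCombination a b c d = !![a + d, b - I * c; b + I * c, a - d] := by
  ext i j
  fin_cases i <;> fin_cases j <;> simp [pauliCombination, σ1, σ2, σ3] <;> ring

theorem σ3_mul_pauliCombination_mul_σ3 (a b c d : ℂ) :
    σ3 * pauliCombination a b c d * σ3 = pauliCombination a (-b) (-c) d := by
  rw [pauliCombination_eq, pauliCombination_eq, σ3]
  ext i j
  fin_cases i <;> fin_cases j <;> simp [mul_apply] <;> ring

theorem σ1_mul_pauliCombination_mul_σ1 (a b c d : ℂ) :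
    σ1 * pauliCombination a b c d * σ1 = pauliCombination a b (-c) (-d) := by
  rw [pauliCombination_eq, pauliCombination_eq, σ1]
  ext i j
  fin_cases i <;> fin_cases j <;> simp [mul_apply] <;> ring

theorem smul_pauliCombination (e a b c d : ℂ) :
    e • pauliCombination a b c d = pauliCombination (e * a) (e * b) (e * c) (e * d) := by
  simp only [pauliCombination, smul_add, smul_smul]

theorem chainFactor_eq_pauliCombination (τ zm Δ s0 s1 s2 s3 z : ℂ) :
    chainFactor τ zm Δ s0 s1 s2 s3 z =
      pauliCombination (s0 * phi τ Δ (z - zm))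
        (s1 / (π * I) * (exp (π * I * (z - zm)) * phi τ (τ / 2 + Δ) (z - zm)))
        (s2 / (π * I) * (exp (π * I * (z - zm)) * phi τ ((1 + τ) / 2 + Δ) (z - zm)))
        (s3 / (π * I) * phi τ (1 / 2 + Δ) (z - zm)) := by
  simp only [chainFactor, pauliCombination, mul_assoc]

theorem statement9_general (τ : ℂ) (zm Δ s0 s1 s2 s3 : ℂ) (z : ℂ) :
    chainFactor τ zm Δ s0 s1 s2 s3 (z + 1) = σ3 * chainFactor τ zm Δ s0 s1 s2 s3 z * σ3 ∧
    chainFactor τ zm Δ s0 s1 s2 s3 (z + τ) =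
      Complex.exp (-2 * (Real.pi : ℂ) * I * Δ) •
        (σ1 * chainFactor τ zm Δ s0 s1 s2 s3 z * σ1) := by
  have hshift : (1 + τ) / 2 + Δ - τ / 2 = 1 / 2 + Δ := by ring
  simp only [chainFactor_eq_pauliCombination, σ3_mul_pauliCombination_mul_σ3,
    σ1_mul_pauliCombination_mul_σ1, smul_pauliCombination, add_sub_right_comm z _ zm,
    exp_mul_phi_add_one, exp_mul_phi_add_τ, add_sub_cancel_left, hshift]
  simp only [phi_add_one, phi_add_τ, exp_neg_two_pi_I_mul_one_half_add]
  constructor <;> congr 1 <;> ring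

/-- monodromy properties of the elliptic chain factor:
`B(z+1) = σ₃ B(z) σ₃` and `B(z+τ) = e^{−2πiΔ} σ₁ B(z) σ₁`. -/
theorem statement9 (τ : ℂ) (hτ : 0 < τ.im) (zm Δ s0 s1 s2 s3 : ℂ) (z : ℂ)
    (hΔ0 : θ11 τ Δ ≠ 0) (hΔ1 : θ11 τ (τ / 2 + Δ) ≠ 0)
    (hΔ2 : θ11 τ ((1 + τ) / 2 + Δ) ≠ 0) (hΔ3 : θ11 τ (1 / 2 + Δ) ≠ 0)
    (h1 : θ11 τ (z - zm) ≠ 0) (h2 : θ11 τ (z + 1 - zm) ≠ 0)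
    (h3 : θ11 τ (z + τ - zm) ≠ 0) :
    chainFactor τ zm Δ s0 s1 s2 s3 (z + 1) = σ3 * chainFactor τ zm Δ s0 s1 s2 s3 z * σ3 ∧
    chainFactor τ zm Δ s0 s1 s2 s3 (z + τ) =
      Complex.exp (-2 * (Real.pi : ℂ) * I * Δ) •
        (σ1 * chainFactor τ zm Δ s0 s1 s2 s3 z * σ1) :=
  statement9_general τ zm Δ s0 s1 s2 s3 z

end
end

section
/- Let a, b, c ∈ ℂ with a = b + c, and let P be the extended quadratic Sklyanin structure functions on ℂ⁵ with coordinates u, s_0, s_1, s_2, s_3: P(s_0,s_1) = −b s_2 s_3, P(s_0,s_2) = a s_1 s_3, P(s_0,s_3) = −c s_1 s_2, P(s_1,s_2) = −s_0 s_3, P(s_1,s_3) = s_0 s_2, P(s_2,s_3) = −s_0 s_1, P(u,s_i) = s_i for i = 0,1,2,3 (extended antisymmetrically). Set N = s_0² + a s_1² + b s_2² and D = s_1² + s_2² + s_3². Then the rational function N/D is a Casimir of the extended bracket, in the cleared-denominator sense: for every coordinate x ∈ {u, s_0, s_1, s_2, s_3} and every point p ∈ ℂ⁵, Σ_{l} [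 (∂N/∂x_l)(p) · D(p) − N(p) · (∂D/∂x_l)(p) ] · P(x_l, x)(p) = 0, the sum running over all five coordinates x_l. (Hence the symplectic leaves of the extended algebra are given by the single condition δ(N/D) = 0 and have dimension 4.) -/
/-!
`N` and `D` are diagonal quadratic forms `∑ wₖ xₖ²` with no `u`-term. Since `{u, sᵢ} = sᵢ`,
bracketing such a form with `u` multiplies it by `-2` (Euler's identity), so the `u`-component
`D {N, u} - N {D, u}` vanishes. Bracketing with `sⱼ` gives `2 · (linear form in w) · ∏_{k ≠ j} sₖ`,
and for `a = b + c` the weights of both `N` and `D` make all four linear forms vanish: both are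
Casimirs of the Sklyanin bracket.
-/

open BigOperators

noncomputable section

/-- Partial derivative of `f : ℂⁿ → ℂ` in the `l`-th coordinate at the point `p`. -/
def pderiv' {n : ℕ} (l : Fin n) (f : (Fin n → ℂ) → ℂ) (p : Fin n → ℂ) : ℂ :=
  deriv (fun t => f (Function.update p l t)) (p l)

/-- Antisymmetric structure functions of the extended quadratic Sklyanin bracket on ℂ⁵,
coordinates `x₀ = u, x₁ = s₀, x₂ = s₁, x₃ = s₂, x₄ = s₃`. -/
def Pext (a b c : ℂ) (i j : Fin 5) (p : Fin 5 → ℂ) : ℂ :=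
  !![0,      p 1,             p 2,            p 3,            p 4;
     -p 1,   0,               -b * p 3 * p 4, a * p 2 * p 4,  -c * p 2 * p 3;
     -p 2,   b * p 3 * p 4,   0,              -(p 1) * p 4,   (p 1) * p 3;
     -p 3,   -a * p 2 * p 4,  (p 1) * p 4,    0,              -(p 1) * p 2;
     -p 4,   c * p 2 * p 3,   -(p 1) * p 3,   (p 1) * p 2,    0] i j

/-- `N = s₀² + a s₁² + b s₂²` as a function on ℂ⁵. -/
def Npoly (a b : ℂ) (p : Fin 5 → ℂ) : ℂ := (p 1) ^ 2 + a * (p 2) ^ 2 + b * (p 3) ^ 2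

/-- `D = s₁² + s₂² + s₃²` as a function on ℂ⁵. -/
def Dpoly (p : Fin 5 → ℂ) : ℂ := (p 2) ^ 2 + (p 3) ^ 2 + (p 4) ^ 2

open Finset

def diagQuad {n : ℕ} (w : Fin n → ℂ) (p : Fin n → ℂ) : ℂ := ∑ k, w k * p k ^ 2

theorem pderiv'_diagQuad {n : ℕ} (w : Fin n → ℂ) (l : Fin n) (p : Fin n → ℂ) :
    pderiv' l (diagQuad w) p = 2 * w l * p l := by
  have hcoord := hasDerivAt_pi.1 (hasDerivAt_update p l (p l))
  have := HasDerivAt.fun_sum (u := univ) fun k _ => ((hcoord k).fun_pow 2).const_mul (w k)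
  unfold pderiv' diagQuad
  rw [this.deriv]
  simp only [Function.update_eq_self, Pi.single_apply, mul_ite, mul_one, mul_zero, sum_ite_eq',
    mem_univ, if_true]
  ring

theorem Npoly_eq_diagQuad (a b : ℂ) : Npoly a b = diagQuad ![0, 1, a, b, 0] := by
  ext p; simp [Npoly, diagQuad, Fin.sum_univ_five]

theorem Dpoly_eq_diagQuad : Dpoly = diagQuad ![0, 0, 1, 1, 1] := by
  ext p; simp [Dpoly, diagQuad, Fin.sum_univ_five]

/-- `extBracket a b c f i p` is the bracket `{f, xᵢ}` at `p`. -/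
def extBracket (a b c : ℂ) (f : (Fin 5 → ℂ) → ℂ) (i : Fin 5) (p : Fin 5 → ℂ) : ℂ :=
  ∑ l, pderiv' l f p * Pext a b c l i p

theorem extBracket_diagQuad_zero (a b c : ℂ) (w : Fin 5 → ℂ) (hw : w 0 = 0) (p : Fin 5 → ℂ) :
    extBracket a b c (diagQuad w) 0 p = -2 * diagQuad w p := by
  simp only [extBracket, diagQuad, pderiv'_diagQuad, Fin.sum_univ_five, Pext, Matrix.of_apply,
    Matrix.cons_val', Matrix.cons_val, Matrix.cons_val_fin_one, Matrix.cons_val_zero,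
    Matrix.cons_val_one, hw]
  ring

theorem extBracket_diagQuad_of_ne_zero {a b c : ℂ} (habc : a = b + c) {w : Fin 5 → ℂ}
    (hw : w 0 = 0) (hb : w 3 - w 4 = b * w 1) (hc : w 2 - w 3 = c * w 1) {i : Fin 5}
    (hi : i ≠ 0) (p : Fin 5 → ℂ) : extBracket a b c (diagQuad w) i p = 0 := by
  subst habc
  have h3 : w 3 = w 4 + b * w 1 := by linear_combination hb
  have h2 : w 2 = w 4 + (b + c) * w 1 := by linear_combination hc + hb
  fin_cases i
  · exact absurd rfl hi
  all_goals
    simp only [extBracket, pderiv'_diagQuad, Fin.sum_univ_five, Pext, Matrix.of_apply,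
      Matrix.cons_val', Matrix.cons_val, Matrix.cons_val_fin_one, Matrix.cons_val_zero,
      Matrix.cons_val_one, Fin.mk_one, Fin.reduceFinMk, hw, h2, h3]
    ring

/-- for `a = b + c`, the rational function `N/D` with
`N = s₀² + a s₁² + b s₂²`, `D = s₁² + s₂² + s₃²` is a Casimir of the extended
quadratic Sklyanin bracket on ℂ⁵, in the cleared-denominator sense. -/
theorem statement15 (a b c : ℂ) (habc : a = b + c) :
    ∀ (i : Fin 5) (p : Fin 5 → ℂ),
      ∑ l : Fin 5,
        (pderiv' l (Npoly a b) p * Dpoly p - Npoly a b p * pderiv' l Dpoly p) *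
          Pext a b c l i p = 0 := by
  intro i p
  have quotient_rule : ∑ l : Fin 5,
      (pderiv' l (Npoly a b) p * Dpoly p - Npoly a b p * pderiv' l Dpoly p) * Pext a b c l i p =
        Dpoly p * extBracket a b c (Npoly a b) i p - Npoly a b p * extBracket a b c Dpoly i p := by
    simp only [extBracket, mul_sum, ← sum_sub_distrib]
    exact sum_congr rfl fun l _ => by ring
  rw [quotient_rule, Npoly_eq_diagQuad, Dpoly_eq_diagQuad]
  rcases eq_or_ne i 0 with rfl | hi
  · rw [extBracket_diagQuad_zero _ _ _ _ rfl, extBracket_diagQuad_zero _ _ _ _ rfl]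
    ring
  · rw [extBracket_diagQuad_of_ne_zero habc rfl (by simp) (by simp [habc]) hi,
      extBracket_diagQuad_of_ne_zero habc rfl (by simp) (by simp) hi]
    ring

end
end
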